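/- arXiv:1706.00544 — 2 statements merged into one kernel-verified Lean document; each statement's English description precedes it below -/
import Mathlib

section
/- Let n ≥ 2, let L be a real symmetric positive semidefinite n×n matrix with eigenvalues 0 = λ₁ ≤ λ₂ ≤ … ≤ λₙ and orthonormal eigenvectors v₁, …, vₙ where v₁ = (1/√n)·1ₙ, let α > 0 and H = (I + αL)⁻¹. Suppose the noise covariance is Σ = Σᵢ₌₁ⁿ σᵢ² vᵢvᵢᵀ with σᵢ ≥ 0 (diagonal in the eigenbasis of L). Then for every x* ∈ ℝⁿ, the mean squared error MSE(α) = ‖(H − I)x*‖₂² + trace(H²Σ) satisfies MSE(α) = Σᵢ₌₂ⁿ qᵢ² (vᵢᵀ x̄*)² + Σᵢ₌₁ⁿ hᵢ² σᵢ², where x̄* = x* − ((1ₙᵀx*)/n)·1ₙ, hᵢ = 1/(1 + αλᵢ), and qᵢ = 1/(1 + 1/(αλᵢ)). -/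
open Matrix

/-!
Writing `V` for the orthogonal matrix with rows `vᵢ`, the eigen-equations give
`L = Vᵀ diag(λ) V`, hence `H = Vᵀ diag(h) V` and `H - I = Vᵀ diag(h - 1) V`. Conjugation by `V`
preserves lengths and traces, so the bias is `∑ᵢ (1 - hᵢ)² (vᵢ ⬝ x*)²` and, `Σ` being
`Vᵀ diag(σ²) V`, the variance is `∑ᵢ hᵢ² σᵢ²`. Finally `1 - hᵢ = qᵢ`, the term `i = 1` vanishes
because `λ₁ = 0`, and for `i ≥ 2` the row `vᵢ` is orthogonal to `v₁ ∝ 1ₙ`, so centring `x*`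
does not change `vᵢ ⬝ x*`.
-/

namespace Matrix

variable {ι : Type*} [Fintype ι]

theorem sum_eq_zero_of_dotProduct_const_eq_zero {w : ι → ℝ} {c : ℝ} (hc : c ≠ 0)
    (h : w ⬝ᵥ (fun _ => c) = 0) : ∑ j, w j = 0 := by
  have hconst : (fun _ => c : ι → ℝ) = c • 1 := by ext; simp
  rw [hconst, dotProduct_smul, dotProduct_one, smul_eq_mul] at h
  exact (mul_eq_zero.mp h).resolve_left hc

theorem dotProduct_sub_smul_one_of_sum_eq_zero {w : ι → ℝ} (hw : ∑ j, w j = 0)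
    (x : ι → ℝ) (m : ℝ) : w ⬝ᵥ (x - m • fun _ => 1) = w ⬝ᵥ x := by
  rw [dotProduct_sub, dotProduct_smul, show (fun _ => 1 : ι → ℝ) = 1 from rfl, dotProduct_one,
    hw, smul_zero, sub_zero]

variable [DecidableEq ι] {V : Matrix ι ι ℝ}

theorem of_mul_of_transpose_eq_one_of_orthonormal {v : ι → ι → ℝ}
    (horth : ∀ i j, v i ⬝ᵥ v j = if i = j then 1 else 0) : of v * (of v)ᵀ = 1 := by
  ext i j
  simpa [mul_apply, one_apply, dotProduct] using horth i j

theorem conj_diagonal_mul_conj_diagonal (hV : V * Vᵀ = 1) (d e : ι → ℝ) :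
    Vᵀ * diagonal d * V * (Vᵀ * diagonal e * V) = Vᵀ * diagonal (d * e) * V := by
  calc Vᵀ * diagonal d * V * (Vᵀ * diagonal e * V)
      = Vᵀ * diagonal d * (V * Vᵀ) * diagonal e * V := by simp only [mul_assoc]
    _ = Vᵀ * diagonal (d * e) * V := by
      rw [hV, mul_one, mul_assoc Vᵀ, diagonal_mul_diagonal]; rfl

theorem inv_conj_diagonal (hV : V * Vᵀ = 1) {d : ι → ℝ} (hd : ∀ i, d i ≠ 0) :
    (Vᵀ * diagonal d * V)⁻¹ = Vᵀ * diagonal d⁻¹ * V := by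
  refine inv_eq_right_inv ?_
  have hdd : d * d⁻¹ = 1 := funext fun i => mul_inv_cancel₀ (hd i)
  rw [conj_diagonal_mul_conj_diagonal hV, hdd, diagonal_one', mul_one,
    mul_eq_one_comm.mp hV]

theorem one_add_smul_conj_diagonal (hV : V * Vᵀ = 1) (a : ℝ) (d : ι → ℝ) :
    1 + a • (Vᵀ * diagonal d * V) = Vᵀ * diagonal (1 + a • d) * V := by
  rw [show diagonal (1 + a • d) = diagonal 1 + diagonal (a • d) from (diagonal_add _ _).symm,
    diagonal_one', diagonal_smul, mul_add, add_mul, mul_one, mul_eq_one_comm.mp hV,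
    Matrix.mul_smul, Matrix.smul_mul]

theorem eq_conj_diagonal_of_mulVec_eq_smul (hV : V * Vᵀ = 1) {L : Matrix ι ι ℝ}
    {ev : ι → ℝ} (heig : ∀ i, L *ᵥ V i = ev i • V i) : L = Vᵀ * diagonal ev * V := by
  have hLV : L * Vᵀ = Vᵀ * diagonal ev := by
    ext i j
    rw [mul_diagonal]
    simpa [mulVec, dotProduct, mul_apply, mul_comm] using congrFun (heig j) i
  rw [← hLV, mul_assoc, mul_eq_one_comm.mp hV, mul_one]

theorem dotProduct_self_transpose_mulVec (hV : V * Vᵀ = 1) (y : ι → ℝ) :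
    Vᵀ *ᵥ y ⬝ᵥ Vᵀ *ᵥ y = y ⬝ᵥ y := by
  rw [dotProduct_comm, dotProduct_mulVec, vecMul_transpose, mulVec_mulVec, hV, one_mulVec]

theorem conj_diagonal_mulVec_dotProduct_self {v : ι → ι → ℝ} (hV : of v * (of v)ᵀ = 1)
    (d x : ι → ℝ) :
    ((of v)ᵀ * diagonal d * of v) *ᵥ x ⬝ᵥ ((of v)ᵀ * diagonal d * of v) *ᵥ x
      = ∑ i, d i ^ 2 * (v i ⬝ᵥ x) ^ 2 := by
  rw [← mulVec_mulVec, ← mulVec_mulVec, dotProduct_self_transpose_mulVec hV, dotProduct]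
  refine Finset.sum_congr rfl fun i _ => ?_
  rw [mulVec_diagonal]
  simp only [mulVec, dotProduct, of_apply]
  ring

theorem trace_conj_diagonal (hV : V * Vᵀ = 1) (d : ι → ℝ) :
    (Vᵀ * diagonal d * V).trace = ∑ i, d i := by
  rw [trace_mul_cycle, hV, one_mul, trace_diagonal]

theorem sum_smul_vecMulVec_eq_conj_diagonal (v : ι → ι → ℝ) (s : ι → ℝ) :
    ∑ i, s i • vecMulVec (v i) (v i) = (of v)ᵀ * diagonal s * of v := by
  ext j k
  rw [mul_assoc, mul_apply]
  simp only [sum_apply, smul_apply, vecMulVec_apply, smul_eq_mul, diagonal_mul, transpose_apply,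
    of_apply]
  exact Finset.sum_congr rfl fun i _ => by ring

end Matrix

theorem stmt_6_general (n : ℕ) [NeZero n]
    (L : Matrix (Fin n) (Fin n) ℝ)
    (ev : Fin n → ℝ) (v : Fin n → Fin n → ℝ)
    (hev0 : ev 0 = 0) (hmono : Monotone ev)
    (heig : ∀ i, L.mulVec (v i) = ev i • v i)
    (horth : ∀ i j, v i ⬝ᵥ v j = if i = j then (1 : ℝ) else 0)
    (hv0 : v 0 = fun _ => 1 / Real.sqrt n)
    (α : ℝ) (hα : 0 < α)
    (σ : Fin n → ℝ) (xs : Fin n → ℝ) :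
    (((1 + α • L)⁻¹ - 1).mulVec xs) ⬝ᵥ (((1 + α • L)⁻¹ - 1).mulVec xs)
      + (((1 + α • L)⁻¹ ^ 2) * (∑ i, σ i ^ 2 • vecMulVec (v i) (v i))).trace
    = (∑ i ∈ Finset.univ.erase 0,
        (1 - 1 / (1 + α * ev i)) ^ 2 *
          (v i ⬝ᵥ (xs - ((∑ j, xs j) / (n : ℝ)) • fun _ => (1 : ℝ))) ^ 2)
      + ∑ i, (1 / (1 + α * ev i)) ^ 2 * σ i ^ 2 := by
  have hV : of v * (of v)ᵀ = 1 := of_mul_of_transpose_eq_one_of_orthonormal horth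
  have hpos : ∀ i, 0 < 1 + α * ev i := fun i => by
    have := hmono (Fin.zero_le i); rw [hev0] at this; positivity
  set h : Fin n → ℝ := fun i => 1 / (1 + α * ev i) with hh
  have hH : (1 + α • L)⁻¹ = (of v)ᵀ * diagonal h * of v := by
    rw [eq_conj_diagonal_of_mulVec_eq_smul hV heig, one_add_smul_conj_diagonal hV,
      inv_conj_diagonal hV (d := 1 + α • ev) fun i => (hpos i).ne']
    congr; ext i; simp [hh]
  have hH1 : (1 + α • L)⁻¹ - 1 = (of v)ᵀ * diagonal (h - 1) * of v := by
    rw [hH, show diagonal (h - 1) = diagonal h - diagonal 1 from (diagonal_sub _ _).symm,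
      diagonal_one', mul_sub, sub_mul, mul_one, mul_eq_one_comm.mp hV]
  have hsum0 : ∀ i ≠ 0, ∑ j, v i j = 0 := fun i hi =>
    sum_eq_zero_of_dotProduct_const_eq_zero (by simp [NeZero.ne n])
      (hv0 ▸ (horth i 0).trans (if_neg hi))
  rw [hH1, conj_diagonal_mulVec_dotProduct_self hV, sq, hH, conj_diagonal_mul_conj_diagonal hV,
    sum_smul_vecMulVec_eq_conj_diagonal, conj_diagonal_mul_conj_diagonal hV, trace_conj_diagonal hV,
    ← Finset.add_sum_erase _ _ (Finset.mem_univ 0)]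
  simp only [hh, hev0, mul_zero, add_zero, div_one, sub_self, Pi.sub_apply, Pi.mul_apply,
    Pi.one_apply, zero_pow two_ne_zero, zero_mul, zero_add]
  congr 1
  · refine Finset.sum_congr rfl fun i hi => ?_
    rw [dotProduct_sub_smul_one_of_sum_eq_zero (hsum0 i (Finset.ne_of_mem_erase hi))]
    ring
  · exact Finset.sum_congr rfl fun i _ => by ring

/-- exact MSE decomposition
`MSE(α) = Σᵢ₌₂ⁿ qᵢ² (vᵢᵀ x̄*)² + Σᵢ₌₁ⁿ hᵢ² σᵢ²` when the noise covariance is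
diagonal in the eigenbasis of `L`. -/
theorem stmt_6 (n : ℕ) [NeZero n] (hn : 2 ≤ n)
    (L : Matrix (Fin n) (Fin n) ℝ) (hL : L.IsSymm)
    (hpsd : ∀ x : Fin n → ℝ, 0 ≤ x ⬝ᵥ L.mulVec x)
    (ev : Fin n → ℝ) (v : Fin n → Fin n → ℝ)
    (hev0 : ev 0 = 0) (hmono : Monotone ev)
    (heig : ∀ i, L.mulVec (v i) = ev i • v i)
    (horth : ∀ i j, v i ⬝ᵥ v j = if i = j then (1 : ℝ) else 0)
    (hv0 : v 0 = fun _ => 1 / Real.sqrt n)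
    (α : ℝ) (hα : 0 < α)
    (σ : Fin n → ℝ) (hσ : ∀ i, 0 ≤ σ i) (xs : Fin n → ℝ) :
    (((1 + α • L)⁻¹ - 1).mulVec xs) ⬝ᵥ (((1 + α • L)⁻¹ - 1).mulVec xs)
      + (((1 + α • L)⁻¹ ^ 2) * (∑ i, σ i ^ 2 • vecMulVec (v i) (v i))).trace
    = (∑ i ∈ Finset.univ.erase 0,
        (1 - 1 / (1 + α * ev i)) ^ 2 *
          (v i ⬝ᵥ (xs - ((∑ j, xs j) / (n : ℝ)) • fun _ => (1 : ℝ))) ^ 2)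
      + ∑ i, (1 / (1 + α * ev i)) ^ 2 * σ i ^ 2 :=
  stmt_6_general n L ev v hev0 hmono heig horth hv0 α hα σ xs
end

section
/- Let n ≥ 2, let L be a real symmetric positive semidefinite n×n matrix with eigenvalues 0 = λ₁ ≤ λ₂ ≤ … ≤ λₙ, λ₂ > 0, and orthonormal eigenvectors v₁, …, vₙ where v₁ = (1/√n)·1ₙ; let α > 0, hᵢ = 1/(1 + αλᵢ), qᵢ = 1 − hᵢ, σᵢ ≥ 0, and let T ≥ 1 be a natural number. Then for every x* ∈ ℝⁿ, with x̄* = x* − ((1ₙᵀx*)/n)·1ₙ, the mean squared error of the estimator built from the average of T i.i.d. observations satisfies Σᵢ₌₂ⁿ qᵢ² (vᵢᵀ x̄*)² + (1/T)·Σᵢ₌₁ⁿ hᵢ² σᵢ² ≤ (1/(1 + 1/(αλₙ)))² · Σᵢ₌₂ⁿ (vᵢᵀ x̄*)² + (1/(1 + αλ₂))² · (Σᵢ₌₂ⁿ σᵢ²)/T + σ₁². -/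
/-!
Both error terms are controlled eigenvalue by eigenvalue. On the bias side the shrinkage factor
`1 - 1/(1 + αλ) = 1/(1 + 1/(αλ))` increases with `λ`, so it is largest at `λₙ`; on the variance side
the factor `1/(1 + αλ)` decreases with `λ`, so for `i ≥ 2` it is largest at `λ₂`, while for `i = 1`
it equals `1` because `λ₁ = 0`, and `σ₁²/T ≤ σ₁²`.
-/

open Matrix Finset

lemma one_sub_one_div_one_add_eq {a : ℝ} (ha : 0 < a) : 1 - 1 / (1 + a) = 1 / (1 + 1 / a) := by
  field_simp
  ring

lemma one_sub_one_div_one_add_sq_le {a b : ℝ} (ha : 0 < a) (hab : a ≤ b) :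
    (1 - 1 / (1 + a)) ^ 2 ≤ (1 / (1 + 1 / b)) ^ 2 := by
  rw [one_sub_one_div_one_add_eq ha]
  have hb : 0 < b := ha.trans_le hab
  gcongr

lemma one_div_one_add_sq_le {a b : ℝ} (ha : 0 ≤ a) (hab : a ≤ b) :
    (1 / (1 + b)) ^ 2 ≤ (1 / (1 + a)) ^ 2 := by
  have hb : 0 ≤ b := ha.trans hab
  gcongr

lemma Finset.sum_mul_le_mul_sum {ι : Type*} {s : Finset ι} {f g : ι → ℝ} {C : ℝ}
    (hf : ∀ i ∈ s, f i ≤ C) (hg : ∀ i ∈ s, 0 ≤ g i) :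
    ∑ i ∈ s, f i * g i ≤ C * ∑ i ∈ s, g i := by
  rw [mul_sum]
  exact sum_le_sum fun i hi => mul_le_mul_of_nonneg_right (hf i hi) (hg i hi)

/-- MSE-UB bound for the average of `T` i.i.d. observations: the
variance term is divided by `T`. -/
theorem stmt_16 (n : ℕ) [NeZero n] (hn : 2 ≤ n)
    (ev : Fin n → ℝ) (v : Fin n → Fin n → ℝ)
    (hev0 : ev 0 = 0) (hmono : Monotone ev) (hev1 : 0 < ev 1)
    (α : ℝ) (hα : 0 < α)
    (σ : Fin n → ℝ)
    (T : ℕ) (hT : 1 ≤ T) (xs : Fin n → ℝ) :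
    (∑ i ∈ Finset.univ.erase 0,
        (1 - 1 / (1 + α * ev i)) ^ 2 *
          (v i ⬝ᵥ (xs - ((∑ j, xs j) / (n : ℝ)) • fun _ => (1 : ℝ))) ^ 2)
      + (1 / (T : ℝ)) * ∑ i, (1 / (1 + α * ev i)) ^ 2 * σ i ^ 2
    ≤ (1 / (1 + 1 / (α * ev ⟨n - 1, by omega⟩))) ^ 2 *
        (∑ i ∈ Finset.univ.erase 0,
          (v i ⬝ᵥ (xs - ((∑ j, xs j) / (n : ℝ)) • fun _ => (1 : ℝ))) ^ 2)
      + (1 / (1 + α * ev 1)) ^ 2 * ((∑ i ∈ Finset.univ.erase 0, σ i ^ 2) / (T : ℝ))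
      + σ 0 ^ 2 := by
  have hev_one_le : ∀ i ∈ univ.erase (0 : Fin n), ev 1 ≤ ev i :=
    fun i hi => hmono (Fin.one_le_of_ne_zero (ne_of_mem_erase hi))
  have hev_le_last : ∀ i, ev i ≤ ev ⟨n - 1, by omega⟩ :=
    fun i => hmono (Fin.le_def.mpr (by simp only; omega))
  have hbias := sum_mul_le_mul_sum (s := univ.erase 0)
    (g := fun i => (v i ⬝ᵥ (xs - ((∑ j, xs j) / (n : ℝ)) • fun _ => (1 : ℝ))) ^ 2)
    (fun i hi => one_sub_one_div_one_add_sq_le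
      (mul_pos hα (hev1.trans_le (hev_one_le i hi)))
      (mul_le_mul_of_nonneg_left (hev_le_last i) hα.le))
    (fun _ _ => sq_nonneg _)
  have hT_inv : 1 / (T : ℝ) ≤ 1 := by
    rw [div_le_one (by positivity)]
    exact_mod_cast hT
  have hvar_total : 1 / (T : ℝ) * ∑ i, (1 / (1 + α * ev i)) ^ 2 * σ i ^ 2
      ≤ (1 / (1 + α * ev 1)) ^ 2 * ((∑ i ∈ univ.erase 0, σ i ^ 2) / T) + σ 0 ^ 2 := by
    rw [← add_sum_erase _ _ (mem_univ 0), hev0, mul_zero, add_zero, div_one, one_pow, one_mul,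
      mul_add]
    have hσ0 : 1 / (T : ℝ) * σ 0 ^ 2 ≤ σ 0 ^ 2 := mul_le_of_le_one_left (sq_nonneg _) hT_inv
    have hσ : 1 / (T : ℝ) * ∑ i ∈ univ.erase 0, (1 / (1 + α * ev i)) ^ 2 * σ i ^ 2
        ≤ (1 / (1 + α * ev 1)) ^ 2 * ((∑ i ∈ univ.erase 0, σ i ^ 2) / T) := by
      rw [mul_div_assoc', mul_comm, mul_one_div]
      gcongr
      exact sum_mul_le_mul_sum
        (fun i hi => one_div_one_add_sq_le (by positivity)
          (mul_le_mul_of_nonneg_left (hev_one_le i hi) hα.le))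
        (fun _ _ => sq_nonneg _)
    linarith
  linarith
end
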